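/- Let α + p < 0 and f ∈ C_c^∞((0,∞)). Then for every R_0 > 0, |α+p|^{-1} R_0^{-2p} |f(R_0)|² + ∫_{R_0}^∞ R^{-1-2p} |f|² dR ≤ (α+p)^{-2} ∫_{R_0}^∞ R^{1-2p-2α} |d/dR(R^α f)|² dR. -/

import Mathlib

open MeasureTheory

set_option maxHeartbeats 1000000 in
/-- α-twisted Hardy inequality with boundary term: if `α + p < 0` and
`f ∈ C_c^∞((0,∞))`, then for every `R₀ > 0`,
`|α+p|⁻¹ R₀^{-2p} |f(R₀)|² + ∫_{R₀}^∞ R^{-1-2p}|f|² dR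
  ≤ (α+p)⁻² ∫_{R₀}^∞ R^{1-2p-2α} |d/dR(R^α f)|² dR`. -/
theorem twisted_hardy_with_boundary (α p : ℝ) (h : α + p < 0) (f : ℝ → ℂ)
    (hf : ContDiff ℝ (⊤ : ℕ∞) f) (hcpt : HasCompactSupport f)
    (hsupp : Function.support f ⊆ Set.Ioi 0) (R₀ : ℝ) (hR₀ : 0 < R₀) :
    |α + p|⁻¹ * (R₀ ^ (-2 * p) * ‖f R₀‖ ^ 2) +
        ∫ R in Set.Ioi R₀, R ^ (-1 - 2 * p) * ‖f R‖ ^ 2 ≤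
      ((α + p)⁻¹) ^ 2 *
        ∫ R in Set.Ioi R₀,
          R ^ (1 - 2 * p - 2 * α) * ‖deriv (fun r : ℝ => ((r ^ α : ℝ) : ℂ) * f r) R‖ ^ 2 := by
  set β := α + p with hβdef
  have hβ : β < 0 := h
  have hβne : β ≠ 0 := ne_of_lt hβ
  set g : ℝ → ℂ := fun r : ℝ => ((r ^ α : ℝ) : ℂ) * f r with hgdef
  set g' : ℝ → ℂ := fun R : ℝ =>
    ((α * R ^ (α - 1) : ℝ) : ℂ) * f R + ((R ^ α : ℝ) : ℂ) * deriv f R with hg'def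
  have hfd : Differentiable ℝ f := hf.differentiable (by simp)
  have hf'c : Continuous (deriv f) := hf.continuous_deriv (by simp)
  have hnorm : ∀ z : ℂ, ‖z‖ ^ 2 = z.re ^ 2 + z.im ^ 2 := by
    intro z
    rw [Complex.sq_norm, Complex.normSq_apply]; ring
  have hgderiv : ∀ R : ℝ, 0 < R → HasDerivAt g (g' R) R := by
    intro R hR
    have h1 : HasDerivAt (fun r : ℝ => r ^ α) (α * R ^ (α - 1)) R :=
      Real.hasDerivAt_rpow_const (Or.inl hR.ne')
    exact (h1.ofReal_comp).mul (hfd R).hasDerivAt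
  set E : ℝ → ℝ := fun R => 2 * ((g R).re * (g' R).re + (g R).im * (g' R).im) with hEdef
  have hEderiv : ∀ R : ℝ, 0 < R → HasDerivAt (fun r => ‖g r‖ ^ 2) (E R) R := by
    intro R hR
    have hgR := hgderiv R hR
    have hre : HasDerivAt (fun r => (g r).re) ((g' R).re) R :=
      Complex.reCLM.hasFDerivAt.comp_hasDerivAt R hgR
    have him : HasDerivAt (fun r => (g r).im) ((g' R).im) R :=
      Complex.imCLM.hasFDerivAt.comp_hasDerivAt R hgR
    have key := (hre.pow 2).add (him.pow 2)
    have heq : (fun r => ‖g r‖ ^ 2) = fun r => (g r).re ^ 2 + (g r).im ^ 2 :=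
      funext fun r => hnorm _
    rw [heq]
    refine key.congr_deriv ?_
    simp [hEdef]; ring
  set W : ℝ → ℝ := fun R => -β * (R ^ (-2 * β) * ‖g R‖ ^ 2) with hWdef
  set φ : ℝ → ℝ := fun R =>
    -β * ((-2 * β * R ^ (-2 * β - 1)) * ‖g R‖ ^ 2 + R ^ (-2 * β) * E R) with hφdef
  have hWderiv : ∀ R : ℝ, 0 < R → HasDerivAt W (φ R) R := by
    intro R hR
    have h1 : HasDerivAt (fun r : ℝ => r ^ (-2 * β)) (-2 * β * R ^ (-2 * β - 1)) R :=
      Real.hasDerivAt_rpow_const (Or.inl hR.ne')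
    exact (h1.mul (hEderiv R hR)).const_mul (-β)
  -- support bound
  obtain ⟨M₀, hM₀⟩ := hcpt.isCompact.bddAbove
  set M : ℝ := max M₀ R₀ + 1 with hMdef
  have hRM : R₀ ≤ M := by
    have := le_max_right M₀ R₀; simp only [hMdef]; linarith
  have hMM₀ : M₀ < M := by
    have := le_max_left M₀ R₀; simp only [hMdef]; linarith
  have hfz : ∀ r : ℝ, M₀ < r → f r = 0 := fun r hr =>
    image_eq_zero_of_notMem_tsupport (fun hmem => absurd (hM₀ hmem) (not_le.mpr hr))
  have hf'z : ∀ r : ℝ, M₀ < r → deriv f r = 0 := by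
    intro r hr
    have hev : f =ᶠ[nhds r] (fun _ => (0 : ℂ)) :=
      Filter.eventuallyEq_of_mem (Ioi_mem_nhds hr) (fun x hx => hfz x hx)
    rw [hev.deriv_eq, deriv_const]
  have hgz : ∀ r : ℝ, M ≤ r → g r = 0 := by
    intro r hr; simp [hgdef, hfz r (lt_of_lt_of_le hMM₀ hr)]
  have hg'z : ∀ r : ℝ, M ≤ r → g' r = 0 := by
    intro r hr
    simp [hg'def, hfz r (lt_of_lt_of_le hMM₀ hr), hf'z r (lt_of_lt_of_le hMM₀ hr)]
  have hφz : ∀ r : ℝ, M ≤ r → φ r = 0 := by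
    intro r hr; simp [hφdef, hEdef, hgz r hr]
  -- continuity
  have hrpc : ∀ q : ℝ, ContinuousOn (fun R : ℝ => R ^ q) (Set.Ici R₀) := fun q =>
    ContinuousOn.rpow_const continuousOn_id
      (fun x hx => Or.inl (lt_of_lt_of_le hR₀ hx).ne')
  have hgc : ContinuousOn g (Set.Ici R₀) :=
    (Complex.continuous_ofReal.comp_continuousOn (hrpc α)).mul hf.continuous.continuousOn
  have hg'c : ContinuousOn g' (Set.Ici R₀) := by
    apply ContinuousOn.add
    · exact (Complex.continuous_ofReal.comp_continuousOn
        (continuousOn_const.mul (hrpc (α - 1)))).mul hf.continuous.continuousOn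
    · exact (Complex.continuous_ofReal.comp_continuousOn (hrpc α)).mul hf'c.continuousOn
  have hEc : ContinuousOn E (Set.Ici R₀) := by
    apply continuousOn_const.mul
    exact ((Complex.continuous_re.comp_continuousOn hgc).mul
        (Complex.continuous_re.comp_continuousOn hg'c)).add
      ((Complex.continuous_im.comp_continuousOn hgc).mul
        (Complex.continuous_im.comp_continuousOn hg'c))
  have hgnc : ContinuousOn (fun R => ‖g R‖ ^ 2) (Set.Ici R₀) := hgc.norm.pow 2
  have hφc : ContinuousOn φ (Set.Ici R₀) := by
    apply continuousOn_const.mul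
    exact ((continuousOn_const.mul (hrpc (-2 * β - 1))).mul hgnc).add
      ((hrpc (-2 * β)).mul hEc)
  set a : ℝ → ℝ := fun R : ℝ => R ^ (-1 - 2 * p) * ‖f R‖ ^ 2 with hadef
  set c : ℝ → ℝ := fun R : ℝ => R ^ (1 - 2 * p - 2 * α) * ‖g' R‖ ^ 2 with hcdef
  have hac : ContinuousOn a (Set.Ici R₀) :=
    (hrpc _).mul (hf.continuous.norm.pow 2).continuousOn
  have hcc : ContinuousOn c (Set.Ici R₀) := (hrpc _).mul (hg'c.norm.pow 2)
  have haz : ∀ r : ℝ, M ≤ r → a r = 0 := by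
    intro r hr; simp [hadef, hfz r (lt_of_lt_of_le hMM₀ hr)]
  have hcz : ∀ r : ℝ, M ≤ r → c r = 0 := by
    intro r hr; simp [hcdef, hg'z r hr]
  -- integrability + reduction to finite interval
  have key : ∀ F : ℝ → ℝ, ContinuousOn F (Set.Ici R₀) → (∀ r, M ≤ r → F r = 0) →
      IntegrableOn F (Set.Ioi R₀) ∧
        (∫ r in Set.Ioi R₀, F r) = ∫ r in Set.Ioc R₀ M, F r := by
    intro F hFc hFz
    have hIcc : IntegrableOn F (Set.Icc R₀ M) :=
      (hFc.mono (fun x hx => hx.1)).integrableOn_compact isCompact_Icc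
    have hIoc : IntegrableOn F (Set.Ioc R₀ M) := hIcc.mono_set Set.Ioc_subset_Icc_self
    have hIoiM : IntegrableOn F (Set.Ioi M) :=
      (integrableOn_zero).congr_fun (fun x hx => (hFz x (le_of_lt hx)).symm) measurableSet_Ioi
    have hu : Set.Ioc R₀ M ∪ Set.Ioi M = Set.Ioi R₀ := Set.Ioc_union_Ioi_eq_Ioi hRM
    constructor
    · rw [← hu]; exact hIoc.union hIoiM
    · rw [← hu, setIntegral_union (Set.Ioc_disjoint_Ioi le_rfl) measurableSet_Ioi hIoc hIoiM,
        show (∫ x in Set.Ioi M, F x) = 0 from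
          setIntegral_eq_zero_of_forall_eq_zero (fun x hx => hFz x (le_of_lt hx)), add_zero]
  have hAk := key a hac haz
  have hCk := key c hcc hcz
  have hφk := key φ hφc hφz
  -- FTC
  have hFTC : (∫ r in Set.Ioc R₀ M, φ r) = W M - W R₀ := by
    rw [← intervalIntegral.integral_of_le hRM]
    apply intervalIntegral.integral_eq_sub_of_hasDerivAt
    · intro t ht
      rw [Set.uIcc_of_le hRM] at ht
      exact hWderiv t (lt_of_lt_of_le hR₀ ht.1)
    · apply ContinuousOn.intervalIntegrable
      rw [Set.uIcc_of_le hRM]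
      exact hφc.mono (fun x hx => hx.1)
  have hWM : W M = 0 := by simp [hWdef, hgz M le_rfl]
  have hφval : (∫ r in Set.Ioi R₀, φ r) = β * (R₀ ^ (-2 * β) * ‖g R₀‖ ^ 2) := by
    rw [hφk.2, hFTC, hWM, hWdef]; ring
  -- pointwise inequality
  have hpt : ∀ R ∈ Set.Ioi R₀, β ^ 2 * a R - φ R ≤ c R := by
    intro R hR'
    have hR : 0 < R := lt_trans hR₀ hR'
    have hRne : R ≠ 0 := hR.ne'
    set u : ℝ := R ^ (-1 - 2 * β) with hudef
    have hu : 0 < u := Real.rpow_pos_of_pos hR _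
    have hu1 : R ^ (1 - 2 * p - 2 * α) = u * R ^ 2 := by
      rw [show (1 - 2 * p - 2 * α) = (-1 - 2 * β) + 1 + 1 by rw [hβdef]; ring,
        Real.rpow_add_one hRne, Real.rpow_add_one hRne, hudef]; ring
    have hu2 : R ^ (-2 * β) = u * R := by
      rw [show (-2 * β) = (-1 - 2 * β) + 1 by ring, Real.rpow_add_one hRne, hudef]
    have hu3 : R ^ (-2 * β - 1) = u := by
      rw [hudef]; congr 1; ring
    have hu4 : R ^ (-1 - 2 * p) = u * R ^ (2 * α) := by
      rw [show (-1 - 2 * p) = (-1 - 2 * β) + 2 * α by rw [hβdef]; ring,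
        Real.rpow_add hR, hudef]
    have hgnorm : ‖g R‖ ^ 2 = R ^ (2 * α) * ‖f R‖ ^ 2 := by
      have h1 : ‖g R‖ = R ^ α * ‖f R‖ := by
        rw [hgdef]
        simp only [norm_mul, Complex.norm_real, Real.norm_eq_abs]
        rw [abs_of_pos (Real.rpow_pos_of_pos hR α)]
      rw [h1, mul_pow]
      congr 1
      rw [← Real.rpow_natCast (R ^ α) 2, ← Real.rpow_mul hR.le]
      norm_num [mul_comm]
    simp only [hadef, hcdef, hφdef, hEdef, hu1, hu2, hu3, hu4]
    rw [hnorm (g R), hnorm (g' R)]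
    rw [show u * R ^ (2 * α) * ‖f R‖ ^ 2 = u * ((g R).re ^ 2 + (g R).im ^ 2) by
      rw [mul_assoc, ← hgnorm, hnorm]]
    set xr := (g R).re; set xi := (g R).im; set yr := (g' R).re; set yi := (g' R).im
    nlinarith [mul_nonneg hu.le (sq_nonneg (R * yr - β * xr)),
      mul_nonneg hu.le (sq_nonneg (R * yi - β * xi))]
  -- combine
  have hint2 : IntegrableOn (fun R => β ^ 2 * a R - φ R) (Set.Ioi R₀) :=
    (hAk.1.const_mul _).sub hφk.1
  have hmono : (∫ R in Set.Ioi R₀, (β ^ 2 * a R - φ R)) ≤ ∫ R in Set.Ioi R₀, c R :=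
    setIntegral_mono_on hint2 hCk.1 measurableSet_Ioi hpt
  rw [integral_sub (hAk.1.const_mul _) hφk.1, integral_const_mul, hφval] at hmono
  have hb : R₀ ^ (-2 * β) * ‖g R₀‖ ^ 2 = R₀ ^ (-2 * p) * ‖f R₀‖ ^ 2 := by
    have h1 : ‖g R₀‖ = R₀ ^ α * ‖f R₀‖ := by
      rw [hgdef]
      simp only [norm_mul, Complex.norm_real, Real.norm_eq_abs]
      rw [abs_of_pos (Real.rpow_pos_of_pos hR₀ α)]
    rw [h1, mul_pow, ← mul_assoc]
    congr 1
    rw [← Real.rpow_natCast (R₀ ^ α) 2, ← Real.rpow_mul hR₀.le, ← Real.rpow_add hR₀]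
    congr 1
    rw [hβdef]; push_cast; ring
  rw [hb] at hmono
  -- rewrite RHS integral
  have hrw : (∫ R in Set.Ioi R₀, R ^ (1 - 2 * p - 2 * α) * ‖deriv g R‖ ^ 2)
      = ∫ R in Set.Ioi R₀, c R := by
    apply setIntegral_congr_fun measurableSet_Ioi
    intro R hR
    rw [hcdef]
    simp only
    rw [(hgderiv R (lt_trans hR₀ hR)).deriv]
  rw [hrw, abs_of_neg hβ]
  set A := ∫ R in Set.Ioi R₀, a R
  set C := ∫ R in Set.Ioi R₀, c R
  set T := R₀ ^ (-2 * p) * ‖f R₀‖ ^ 2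
  -- hmono : β^2 * A - β * T ≤ C ; goal : (-β)⁻¹ * T + A ≤ (β⁻¹)^2 * C
  have h1 : (0:ℝ) < (β⁻¹) ^ 2 := by
    have := pow_ne_zero 2 (inv_ne_zero hβne)
    exact lt_of_le_of_ne (sq_nonneg _) (Ne.symm this)
  have h2 := mul_le_mul_of_nonneg_left hmono h1.le
  have h3 : (β⁻¹) ^ 2 * (β ^ 2 * A - β * T) = (-β)⁻¹ * T + A := by
    have hinv : β⁻¹ * β = 1 := inv_mul_cancel₀ hβne
    have h5 : (β⁻¹) ^ 2 * β ^ 2 = 1 := by rw [← mul_pow, hinv, one_pow]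
    have h4 : (β⁻¹) ^ 2 * β = β⁻¹ := by rw [sq, mul_assoc, hinv, mul_one]
    calc (β⁻¹) ^ 2 * (β ^ 2 * A - β * T)
        = ((β⁻¹) ^ 2 * β ^ 2) * A - ((β⁻¹) ^ 2 * β) * T := by ring
      _ = A - β⁻¹ * T := by rw [h5, h4]; ring
      _ = (-β)⁻¹ * T + A := by rw [inv_neg]; ring
  linarith [h2, h3]
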